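/- arXiv:1703.04664 — 2 statements merged into one kernel-verified Lean document; each statement's English description precedes it below -/
import Mathlib

section
/- For a uniformly random permutation π of a finite set Ω and nonempty subsets S₁, S₂ ⊆ Ω, the probability that min(π(S₁)) = min(π(S₂)) equals |S₁ ∩ S₂| / |S₁ ∪ S₂| (the Jaccard similarity). -/
/-!
The minimum of `π(S₁)` and the minimum of `π(S₂)` coincide exactly when the point of
`S₁ ∪ S₂` at which `π` is smallest lies in `S₁ ∩ S₂`. That point is uniformly distributed
on `S₁ ∪ S₂`: precomposing `π` with the transposition of two points of `S₁ ∪ S₂` leaves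
`π(S₁ ∪ S₂)` unchanged and exchanges the two points as candidates for the minimiser.
-/

open Finset

theorem Finset.image_swap_of_mem {α : Type*} [DecidableEq α] {U : Finset α} {x y : α}
    (hx : x ∈ U) (hy : y ∈ U) : U.image (Equiv.swap x y) = U := by
  refine eq_of_subset_of_card_le (fun z hz => ?_)
    (card_image_of_injective _ (Equiv.swap x y).injective).ge
  obtain ⟨w, hw, rfl⟩ := mem_image.1 hz
  rw [Equiv.swap_apply_def]
  split_ifs <;> assumption

namespace Equiv

variable {α β : Type*} [LinearOrder β] [DecidableEq β]

def argminOn (π : α ≃ β) (U : Finset α) (hU : U.Nonempty) : α :=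
  π.symm ((U.image π).min' (hU.image π))

section Argmin

variable (π : α ≃ β) {U : Finset α} (hU : U.Nonempty)

theorem apply_argminOn : π (π.argminOn U hU) = (U.image π).min' (hU.image π) :=
  π.apply_symm_apply _

theorem min'_image_eq_iff_argminOn_mem {S : Finset α} (hS : S.Nonempty) (hSU : S ⊆ U) :
    (S.image π).min' (hS.image π) = (U.image π).min' (hU.image π) ↔ π.argminOn U hU ∈ S := by
  constructor
  · intro h
    obtain ⟨x, hx, hπx⟩ := mem_image.1 ((S.image π).min'_mem (hS.image π))
    rwa [argminOn, ← h, ← hπx, symm_apply_apply]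
  · intro h
    refine le_antisymm ?_ (min'_subset _ (image_subset_image hSU))
    rw [← π.apply_argminOn hU]
    exact min'_le _ _ (mem_image_of_mem π h)

theorem argminOn_mem : π.argminOn U hU ∈ U :=
  (π.min'_image_eq_iff_argminOn_mem hU hU Subset.rfl).1 rfl

theorem min'_image_eq_min'_image_iff [DecidableEq α] {S₁ S₂ : Finset α} (h₁ : S₁.Nonempty)
    (h₂ : S₂.Nonempty) :
    (S₁.image π).min' (h₁.image π) = (S₂.image π).min' (h₂.image π) ↔
      π.argminOn (S₁ ∪ S₂) (h₁.mono subset_union_left) ∈ S₁ ∩ S₂ := by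
  have hU := h₁.mono (subset_union_left (s₂ := S₂))
  have hmin : ((S₁ ∪ S₂).image π).min' (hU.image π) =
      (S₁.image π).min' (h₁.image π) ⊓ (S₂.image π).min' (h₂.image π) := by
    simp_rw [image_union]
    -- `min'_union` takes its `DecidableEq` instance from the order, not from `[DecidableEq β]`
    convert min'_union (h₁.image π) (h₂.image π)
  rw [mem_inter, ← π.min'_image_eq_iff_argminOn_mem hU h₁ subset_union_left,
    ← π.min'_image_eq_iff_argminOn_mem hU h₂ subset_union_right, hmin]
  constructor
  · intro h
    simp [h]
  · rintro ⟨h1, h2⟩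
    exact h1.trans h2.symm

theorem argminOn_swap_trans [DecidableEq α] {x y : α} (hx : x ∈ U) (hy : y ∈ U) :
    ((swap x y).trans π).argminOn U hU = swap x y (π.argminOn U hU) := by
  have himage : U.image ((swap x y).trans π) = U.image π := by
    rw [coe_trans, ← image_image, image_swap_of_mem hx hy]
  simp only [argminOn, himage, symm_trans_apply, symm_swap]

end Argmin

variable [Fintype α] [Fintype β] [DecidableEq α] {U : Finset α} (hU : U.Nonempty)

theorem card_argminOn_eq_card_argminOn {x y : α} (hx : x ∈ U) (hy : y ∈ U) :
    #{π : α ≃ β | π.argminOn U hU = x} = #{π : α ≃ β | π.argminOn U hU = y} := by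
  refine card_nbij' ((swap x y).trans ·) ((swap x y).trans ·) ?_ ?_ ?_ ?_ <;>
    intro π hπ <;> simp only [coe_filter, Set.mem_ofPred_eq, mem_univ, true_and] at hπ ⊢
  · rw [argminOn_swap_trans π hU hx hy, hπ, swap_apply_left]
  · rw [argminOn_swap_trans π hU hx hy, hπ, swap_apply_right]
  · ext; simp
  · ext; simp

theorem card_argminOn_mem_mul_card {T : Finset α} (hTU : T ⊆ U) :
    #{π : α ≃ β | π.argminOn U hU ∈ T} * #U = #T * Fintype.card (α ≃ β) := by
  have ⟨x₀, hx₀⟩ := hU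
  have hfibers : ∀ T ⊆ U,
      #{π : α ≃ β | π.argminOn U hU ∈ T} = #T * #{π : α ≃ β | π.argminOn U hU = x₀} :=
    fun T hTU => (sum_card_fiberwise_eq_card_filter _ _ _).symm.trans <|
      sum_const_nat fun x hx => card_argminOn_eq_card_argminOn hU (hTU hx) hx₀
  have huniv : Fintype.card (α ≃ β) = #{π : α ≃ β | π.argminOn U hU ∈ U} := by
    rw [filter_true_of_mem fun π _ => π.argminOn_mem hU, card_univ]
  rw [huniv, hfibers T hTU, hfibers U Subset.rfl]
  ring

end Equiv

/-- For a uniformly random permutation `π` of a finite linearly ordered set `Ω` and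
nonempty subsets `S₁ S₂ ⊆ Ω`, the probability that `min (π '' S₁) = min (π '' S₂)`
equals the Jaccard similarity `|S₁ ∩ S₂| / |S₁ ∪ S₂|`. -/
theorem minhash_collision_prob {Ω : Type*} [Fintype Ω] [LinearOrder Ω] [DecidableEq Ω]
    (S₁ S₂ : Finset Ω) (h₁ : S₁.Nonempty) (h₂ : S₂.Nonempty) :
    (Nat.card {π : Equiv.Perm Ω //
        (S₁.image π).min' (h₁.image π) = (S₂.image π).min' (h₂.image π)} : ℝ) /
      (Nat.card (Equiv.Perm Ω) : ℝ)
    = ((S₁ ∩ S₂).card : ℝ) / ((S₁ ∪ S₂).card : ℝ) := by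
  have hU := h₁.mono (subset_union_left (s₂ := S₂))
  have hcollisions : Nat.card {π : Equiv.Perm Ω //
      (S₁.image π).min' (h₁.image π) = (S₂.image π).min' (h₂.image π)} =
      #{π : Equiv.Perm Ω | π.argminOn (S₁ ∪ S₂) hU ∈ S₁ ∩ S₂} := by
    rw [Nat.card_eq_fintype_card, Fintype.card_subtype]
    exact congrArg card (filter_congr fun π _ => π.min'_image_eq_min'_image_iff h₁ h₂)
  have hcount := Equiv.card_argminOn_mem_mul_card (β := Ω) hU inter_subset_union
  rw [hcollisions, Nat.card_eq_fintype_card, div_eq_div_iff (by positivity) (by positivity)]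
  exact_mod_cast hcount
end

section
/- For one permutation hashing with k bins: conditioned on bin i being non-empty for S₁ ∪ S₂ (i.e., π(S₁ ∪ S₂) ∩ Ω_i ≠ ∅), the probability that min(π(S₁) ∩ Ω_i) = min(π(S₂) ∩ Ω_i) equals the Jaccard similarity R = |S₁ ∩ S₂|/|S₁ ∪ S₂|. -/
open Finset

section Aux

variable {n : ℕ}

private lemma oph_filter_image_trans (p : Fin n → Prop) [DecidablePred p]
    (π : Equiv.Perm (Fin n)) {U : Finset (Fin n)} {x y : Fin n} (hx : x ∈ U) (hy : y ∈ U) :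
    ((U.image ((Equiv.swap x y).trans π)).filter p) = (U.image π).filter p := by
  congr 1
  have : U.image ((Equiv.swap x y).trans π) = (U.image (Equiv.swap x y)).image π := by
    rw [Finset.image_image]; rfl
  rw [this]
  congr 1
  have hmap : U.map ((Equiv.swap x y : Equiv.Perm (Fin n)) : Fin n ↪ Fin n) = U :=
    Finset.map_perm (by
      intro a ha
      simp only [Set.mem_setOf_eq] at ha
      by_contra hU
      rcases eq_or_ne a x with rfl | hax
      · exact hU hx
      rcases eq_or_ne a y with rfl | hay
      · exact hU hy
      · exact ha (Equiv.swap_apply_of_ne_of_ne hax hay))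
  rwa [Finset.map_eq_image, Equiv.coe_toEmbedding] at hmap

/-- If the two filtered mins agree and `m` achieves the union min while lying in the
first filtered image, then the argmin lies in the intersection. -/
private lemma oph_argmin_mem (p : Fin n → Prop) [DecidablePred p]
    (π : Equiv.Perm (Fin n)) {T₁ T₂ : Finset (Fin n)} {m : Fin n}
    (hA : ((T₁.image π).filter p).min = ((T₂.image π).filter p).min)
    (hm : m ∈ (T₁.image π).filter p)
    (hmin : (((T₁.image π).filter p) ∪ ((T₂.image π).filter p)).min = (m : WithTop (Fin n))) :
    ∃ x ∈ T₁ ∩ T₂, π x = m := by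
  have h1 : ((T₁.image π).filter p).min ≤ (m : WithTop (Fin n)) := Finset.min_le hm
  have hne : ((T₁.image π).filter p).Nonempty := ⟨m, hm⟩
  obtain ⟨m₁, hm₁⟩ := Finset.min_of_nonempty hne
  have hm₁mem : m₁ ∈ (T₁.image π).filter p := Finset.mem_of_min hm₁
  have hm₁mem' : m₁ ∈ (T₂.image π).filter p := Finset.mem_of_min (hA ▸ hm₁)
  have h2 : (((T₁.image π).filter p) ∪ ((T₂.image π).filter p)).min ≤ (m₁ : WithTop (Fin n)) :=
    Finset.min_le (Finset.mem_union_left _ hm₁mem)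
  rw [hmin] at h2
  rw [hm₁] at h1
  have hmm : m₁ = m := le_antisymm (WithTop.coe_le_coe.mp h1) (WithTop.coe_le_coe.mp h2)
  subst hmm
  simp only [Finset.mem_filter, Finset.mem_image] at hm₁mem hm₁mem'
  obtain ⟨⟨a, ha, hπa⟩, -⟩ := hm₁mem
  obtain ⟨⟨b, hb, hπb⟩, -⟩ := hm₁mem'
  have : a = b := π.injective (hπa.trans hπb.symm)
  subst this
  exact ⟨a, Finset.mem_inter.mpr ⟨ha, hb⟩, hπa⟩

/-- Conversely: if the union argmin lies in the intersection, the two filtered mins agree. -/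
private lemma oph_mins_eq (p : Fin n → Prop) [DecidablePred p]
    (π : Equiv.Perm (Fin n)) {S₁ S₂ : Finset (Fin n)} {x : Fin n}
    (hx : x ∈ S₁ ∩ S₂)
    (hmin : (((S₁ ∪ S₂).image π).filter p).min = (π x : WithTop (Fin n))) :
    ((S₁.image π).filter p).min = ((S₂.image π).filter p).min := by
  have hmemU : π x ∈ ((S₁ ∪ S₂).image π).filter p := Finset.mem_of_min hmin
  have hp : p (π x) := (Finset.mem_filter.mp hmemU).2
  rw [Finset.mem_inter] at hx
  have key : ∀ S : Finset (Fin n), x ∈ S → S ⊆ S₁ ∪ S₂ →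
      ((S.image π).filter p).min = (π x : WithTop (Fin n)) := by
    intro S hxS hsub
    have hmem : π x ∈ (S.image π).filter p :=
      Finset.mem_filter.mpr ⟨Finset.mem_image_of_mem _ hxS, hp⟩
    have h1 : ((S.image π).filter p).min ≤ (π x : WithTop (Fin n)) := Finset.min_le hmem
    have h2 : (((S₁ ∪ S₂).image π).filter p).min ≤ ((S.image π).filter p).min := by
      apply Finset.le_min
      intro b hb
      exact Finset.min_le (Finset.mem_of_subset
        (Finset.filter_subset_filter _ (Finset.image_subset_image hsub)) hb)
    rw [hmin] at h2
    exact le_antisymm h1 h2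
  rw [key S₁ hx.1 Finset.subset_union_left, key S₂ hx.2 Finset.subset_union_right]

private lemma oph_aux (p : Fin n → Prop) [DecidablePred p]
    (S₁ S₂ : Finset (Fin n)) (hS : (S₁ ∪ S₂).Nonempty)
    (hB : ∃ π : Equiv.Perm (Fin n), (((S₁ ∪ S₂).image π).filter p).Nonempty) :
    (Nat.card {π : Equiv.Perm (Fin n) //
        ((S₁.image π).filter p).min = ((S₂.image π).filter p).min ∧
        (((S₁ ∪ S₂).image π).filter p).Nonempty} : ℝ) /
      (Nat.card {π : Equiv.Perm (Fin n) //
        (((S₁ ∪ S₂).image π).filter p).Nonempty} : ℝ)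
    = ((S₁ ∩ S₂).card : ℝ) / ((S₁ ∪ S₂).card : ℝ) := by
  classical
  set U : Finset (Fin n) := S₁ ∪ S₂ with hU
  obtain ⟨u₀, hu₀⟩ := hS
  -- the default element
  set d : Fin n := u₀ with hd
  -- the argmin function
  set g : Equiv.Perm (Fin n) → Fin n :=
    fun π => π.symm (WithTop.untopD d (((U.image π).filter p).min)) with hg
  set B : Equiv.Perm (Fin n) → Prop := fun π => ((U.image π).filter p).Nonempty with hBdef
  set A : Equiv.Perm (Fin n) → Prop :=
    fun π => ((S₁.image π).filter p).min = ((S₂.image π).filter p).min with hAdef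
  set fib : Fin n → Finset (Equiv.Perm (Fin n)) :=
    fun x => Finset.univ.filter (fun π => B π ∧ ((U.image π).filter p).min = (π x : WithTop (Fin n)))
    with hfib
  -- under B, g π = x iff min = π x
  have hgiff : ∀ π : Equiv.Perm (Fin n), B π → ∀ x : Fin n,
      (g π = x ↔ ((U.image π).filter p).min = (π x : WithTop (Fin n))) := by
    intro π hπ x
    obtain ⟨m, hm⟩ := Finset.min_of_nonempty hπ
    rw [hg]
    simp only [hm, WithTop.untopD_coe]
    constructor
    · rintro rfl
      simp
    · intro h
      have hmx : m = π x := by exact_mod_cast h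
      rw [hmx, Equiv.symm_apply_apply]
  -- under B, g π ∈ U
  have hgmem : ∀ π : Equiv.Perm (Fin n), B π → g π ∈ U := by
    intro π hπ
    obtain ⟨m, hm⟩ := Finset.min_of_nonempty hπ
    have := Finset.mem_of_min hm
    simp only [Finset.mem_filter, Finset.mem_image] at this
    obtain ⟨⟨a, ha, hπa⟩, -⟩ := this
    rw [hg]
    simp only [hm, WithTop.untopD_coe, ← hπa, Equiv.symm_apply_apply]
    exact ha
  -- all fibers over U have the same cardinality
  have hfib_card : ∀ x ∈ U, ∀ y ∈ U, (fib x).card = (fib y).card := by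
    intro x hx y hy
    apply Finset.card_bij' (fun π _ => (Equiv.swap x y).trans π)
      (fun σ _ => (Equiv.swap x y).trans σ)
    · intro π hπ
      simp only [hfib, Finset.mem_filter, Finset.mem_univ, true_and] at hπ ⊢
      obtain ⟨hπB, hπmin⟩ := hπ
      have him := oph_filter_image_trans p π hx hy (U := U)
      constructor
      · rw [hBdef]; simp only []; rw [him]; exact hπB
      · rw [him, hπmin]
        congr 1
        simp [Equiv.swap_apply_right]
    · intro σ hσ
      simp only [hfib, Finset.mem_filter, Finset.mem_univ, true_and] at hσ ⊢
      obtain ⟨hσB, hσmin⟩ := hσ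
      have him := oph_filter_image_trans p σ hx hy (U := U)
      constructor
      · rw [hBdef]; simp only []; rw [him]; exact hσB
      · rw [him, hσmin]
        congr 1
        simp [Equiv.swap_apply_left]
    · intro π _
      ext z
      simp [Equiv.swap_apply_self]
    · intro σ _
      ext z
      simp [Equiv.swap_apply_self]
  -- fiber identification
  have hfiber_eq_B : ∀ x ∈ U,
      (Finset.univ.filter B).filter (fun π => g π = x) = fib x := by
    intro x _
    ext π
    simp only [hfib, Finset.mem_filter, Finset.mem_univ, true_and, and_congr_right_iff]
    intro hπB
    exact hgiff π hπB x
  have hcardB : (Finset.univ.filter B).card = ∑ x ∈ U, (fib x).card := by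
    rw [Finset.card_eq_sum_card_fiberwise (f := g) (t := U)
      (fun π hπ => hgmem π (Finset.mem_filter.mp hπ).2)]
    exact Finset.sum_congr rfl fun x hx => by rw [hfiber_eq_B x hx]
  -- fiber identification for A ∧ B
  have hfiber_eq_AB : ∀ x ∈ S₁ ∩ S₂,
      (Finset.univ.filter (fun π => A π ∧ B π)).filter (fun π => g π = x) = fib x := by
    intro x hx
    ext π
    simp only [hfib, Finset.mem_filter, Finset.mem_univ, true_and]
    constructor
    · rintro ⟨⟨hA, hB⟩, hgx⟩
      exact ⟨hB, (hgiff π hB x).mp hgx⟩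
    · rintro ⟨hB, hmin⟩
      exact ⟨⟨oph_mins_eq p π hx hmin, hB⟩, (hgiff π hB x).mpr hmin⟩
  have hgmemAB : ∀ π, A π → B π → g π ∈ S₁ ∩ S₂ := by
    intro π hA hB
    obtain ⟨m, hm⟩ := Finset.min_of_nonempty hB
    have hmU : (((S₁.image π).filter p) ∪ ((S₂.image π).filter p)).min = (m : WithTop (Fin n)) := by
      rw [← Finset.filter_union, ← Finset.image_union]; exact hm
    have hmmem : m ∈ ((S₁.image π).filter p) ∪ ((S₂.image π).filter p) := by
      rw [← Finset.filter_union, ← Finset.image_union]; exact Finset.mem_of_min hm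
    have hgval : g π = π.symm m := by rw [hg]; simp [hm]
    rcases Finset.mem_union.mp hmmem with h | h
    · obtain ⟨x, hxmem, hπx⟩ := oph_argmin_mem p π hA h hmU
      rw [hgval, ← hπx, Equiv.symm_apply_apply]
      exact hxmem
    · obtain ⟨x, hxmem, hπx⟩ := oph_argmin_mem p π hA.symm h (by rw [Finset.union_comm]; exact hmU)
      rw [hgval, ← hπx, Equiv.symm_apply_apply]
      rw [Finset.inter_comm]
      exact hxmem
  have hcardAB : (Finset.univ.filter (fun π => A π ∧ B π)).card
      = ∑ x ∈ S₁ ∩ S₂, (fib x).card := by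
    rw [Finset.card_eq_sum_card_fiberwise (f := g) (t := S₁ ∩ S₂)
      (fun π hπ => by
        have h := (Finset.mem_filter.mp hπ).2
        exact hgmemAB π h.1 h.2)]
    exact Finset.sum_congr rfl fun x hx => by rw [hfiber_eq_AB x hx]
  -- constant fiber cardinality
  set c : ℕ := (fib u₀).card with hc
  have hsumB : ∑ x ∈ U, (fib x).card = U.card * c := by
    rw [Finset.sum_congr rfl (fun x hx => hfib_card x hx u₀ hu₀)]
    simp [mul_comm]
    exact Or.inl hc.symm
  have hsumAB : ∑ x ∈ S₁ ∩ S₂, (fib x).card = (S₁ ∩ S₂).card * c := by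
    have hsub : S₁ ∩ S₂ ⊆ U := fun a ha => Finset.mem_union_left _ (Finset.mem_inter.mp ha).1
    rw [Finset.sum_congr rfl (fun x hx => hfib_card x (hsub hx) u₀ hu₀)]
    simp [mul_comm]
    exact Or.inl hc.symm
  -- positivity of c
  obtain ⟨π₀, hπ₀⟩ := hB
  have hBpos : 0 < (Finset.univ.filter B).card :=
    Finset.card_pos.mpr ⟨π₀, Finset.mem_filter.mpr ⟨Finset.mem_univ _, hπ₀⟩⟩
  have hcpos : 0 < c := by
    by_contra h
    push_neg at h
    interval_cases c
    rw [hcardB, hsumB, mul_zero] at hBpos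
    exact lt_irrefl 0 hBpos
  have hUpos : 0 < U.card := Finset.card_pos.mpr ⟨u₀, hu₀⟩
  -- convert Nat.card of subtypes to filter cards
  have hNB : Nat.card {π : Equiv.Perm (Fin n) //
      (((S₁ ∪ S₂).image π).filter p).Nonempty} = (Finset.univ.filter B).card := by
    rw [Nat.card_eq_fintype_card, Fintype.card_subtype]
  have hNAB : Nat.card {π : Equiv.Perm (Fin n) //
      ((S₁.image π).filter p).min = ((S₂.image π).filter p).min ∧
      (((S₁ ∪ S₂).image π).filter p).Nonempty}
      = (Finset.univ.filter (fun π => A π ∧ B π)).card := by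
    rw [Nat.card_eq_fintype_card, Fintype.card_subtype]
  rw [hNB, hNAB, hcardB, hcardAB, hsumB, hsumAB]
  push_cast
  rw [mul_div_mul_right _ _ (by exact_mod_cast hcpos.ne' : (c : ℝ) ≠ 0)]

end Aux

/-- One permutation hashing: conditioned on bin `i` being simultaneously non-empty
(i.e. `π(S₁ ∪ S₂) ∩ Ω_i ≠ ∅`), the probability that
`min(π(S₁) ∩ Ω_i) = min(π(S₂) ∩ Ω_i)` equals the Jaccard similarity
`|S₁ ∩ S₂| / |S₁ ∪ S₂|`. Here `Ω = Fin (k·w)` and `Ω_i = {j | j / w = i}`. -/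
theorem oph_conditional_collision_prob (k w : ℕ) (hw : 0 < w) (i : ℕ) (hi : i < k)
    (S₁ S₂ : Finset (Fin (k * w))) (hS : (S₁ ∪ S₂).Nonempty) :
    (Nat.card {π : Equiv.Perm (Fin (k * w)) //
        ((S₁.image π).filter (fun j : Fin (k * w) => (j : ℕ) / w = i)).min
          = ((S₂.image π).filter (fun j : Fin (k * w) => (j : ℕ) / w = i)).min ∧
        (((S₁ ∪ S₂).image π).filter (fun j : Fin (k * w) => (j : ℕ) / w = i)).Nonempty} : ℝ) /
      (Nat.card {π : Equiv.Perm (Fin (k * w)) //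
        (((S₁ ∪ S₂).image π).filter (fun j : Fin (k * w) => (j : ℕ) / w = i)).Nonempty} : ℝ)
    = ((S₁ ∩ S₂).card : ℝ) / ((S₁ ∪ S₂).card : ℝ) := by
  apply oph_aux _ _ _ hS
  obtain ⟨u, hu⟩ := hS
  have hiw : i * w < k * w := (Nat.mul_lt_mul_right hw).mpr hi
  refine ⟨Equiv.swap u ⟨i * w, hiw⟩, ⟨⟨i * w, hiw⟩, ?_⟩⟩
  refine Finset.mem_filter.mpr ⟨?_, ?_⟩
  · exact Finset.mem_image.mpr ⟨u, hu, Equiv.swap_apply_left u _⟩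
  · simp [Nat.mul_div_cancel _ hw]
end
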